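/- arXiv:1412.1639 — 3 statements merged into one kernel-verified Lean document; each statement's English description precedes it below -/
import Mathlib

section
/- Let G = (V,E) be a finite directed acyclic graph, let s, v, w ∈ V, suppose there is a directed path from s to v, and suppose there are two distinct simple paths from v to w in G. Then there are two distinct simple paths from s to w in G. -/
/-- A simple (directed) path from `v` to `w` in the directed graph with edge relation `E`:
a nonempty list of pairwise distinct vertices starting at `v`, ending at `w`,
with consecutive vertices joined by edges. -/
def IsSimplePath {V : Type*} (E : V → V → Prop) (v w : V) (p : List V) : Prop :=
  p.Chain' E ∧ p.head? = some v ∧ p.getLast? = some w ∧ p.Nodup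

/-- A directed graph is singly-connected if for every pair of vertices there is
at most one simple path between them. -/
def SinglyConnected {V : Type*} (E : V → V → Prop) : Prop :=
  ∀ v w : V, ∀ p q : List V, IsSimplePath E v w p → IsSimplePath E v w q → p = q

/-- A directed graph is acyclic if it has no directed cycle. -/
def DAcyclic {V : Type*} (E : V → V → Prop) : Prop :=
  ∀ v : V, ¬ Relation.TransGen E v v

/-!
Walk back from `v` to `s` one edge at a time and prepend each new vertex `a` to both paths.
An edge `a → b` followed by a path from `b` through `a` would be a cycle, so `a` is not on
either path and both stay simple; they stay distinct because their tails are.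
-/

namespace IsSimplePath

variable {V : Type*} {E : V → V → Prop} {a v w : V} {p : List V}

theorem reflTransGen_of_mem (hp : IsSimplePath E v w p) {x : V} (hx : x ∈ p) :
    Relation.ReflTransGen E v x :=
  hp.1.induction _ _ (fun _ _ h₁ h₂ => h₂.tail h₁)
    (fun hne => by rw [(List.head_eq_iff_head?_eq_some hne).2 hp.2.1]) x hx

theorem cons (hp : IsSimplePath E v w p) (hav : E a v) (ha : a ∉ p) :
    IsSimplePath E a w (a :: p) := by
  obtain ⟨hc, hh, hl, hn⟩ := hp
  refine ⟨List.isChain_cons.2 ⟨by simpa [hh] using hav, hc⟩, rfl, ?_, List.nodup_cons.2 ⟨ha, hn⟩⟩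
  rw [List.getLast?_cons, hl]
  rfl

theorem not_mem_of_dAcyclic (hacyc : DAcyclic E) (hp : IsSimplePath E v w p) (hav : E a v) :
    a ∉ p :=
  fun ha => hacyc a (.head' hav (hp.reflTransGen_of_mem ha))

theorem cons_of_dAcyclic (hacyc : DAcyclic E) (hp : IsSimplePath E v w p) (hav : E a v) :
    IsSimplePath E a w (a :: p) :=
  hp.cons hav (hp.not_mem_of_dAcyclic hacyc hav)

end IsSimplePath

theorem two_paths_from_ancestor_general {V : Type*} (E : V → V → Prop)
    (hacyc : DAcyclic E) (s v w : V) (hsv : Relation.ReflTransGen E s v)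
    (p₁ p₂ : List V) (hne : p₁ ≠ p₂)
    (h₁ : IsSimplePath E v w p₁) (h₂ : IsSimplePath E v w p₂) :
    ∃ q₁ q₂ : List V, q₁ ≠ q₂ ∧ IsSimplePath E s w q₁ ∧ IsSimplePath E s w q₂ := by
  induction hsv using Relation.ReflTransGen.head_induction_on with
  | refl => exact ⟨p₁, p₂, hne, h₁, h₂⟩
  | head hab _ ih =>
    obtain ⟨q₁, q₂, hq, hq₁, hq₂⟩ := ih
    exact ⟨_ :: q₁, _ :: q₂, List.cons_injective.ne hq, hq₁.cons_of_dAcyclic hacyc hab,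
      hq₂.cons_of_dAcyclic hacyc hab⟩

/-- in a finite DAG, if there is a directed path from `s` to `v` and two
distinct simple paths from `v` to `w`, then there are two distinct simple paths from
`s` to `w`. -/
theorem two_paths_from_ancestor {V : Type*} [Finite V] (E : V → V → Prop)
    (hacyc : DAcyclic E) (s v w : V) (hsv : Relation.ReflTransGen E s v)
    (p₁ p₂ : List V) (hne : p₁ ≠ p₂)
    (h₁ : IsSimplePath E v w p₁) (h₂ : IsSimplePath E v w p₂) :
    ∃ q₁ q₂ : List V, q₁ ≠ q₂ ∧ IsSimplePath E s w q₁ ∧ IsSimplePath E s w q₂ :=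
  two_paths_from_ancestor_general E hacyc s v w hsv p₁ p₂ hne h₁ h₂
end

section
/- Let G = (V,E) be a finite undirected graph, let G' = (V',E') be the ESC reduction graph of G, and let C ⊆ E' be an edge set such that the directed graph (V', E' \ C) is singly-connected. Then G has a vertex cover U with |U| ≤ |C|. -/
/-- The vertex set of the ESC reduction graph of an undirected graph `G`: two vertices
`v'`, `v''` for every vertex `v` of `G` and two vertices `e'`, `e''` for every edge `e`
of `G`. -/
def ESCVert {V : Type*} (G : SimpleGraph V) : Type _ :=
  (V ⊕ V) ⊕ (G.edgeSet ⊕ G.edgeSet)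

/-- The vertex `v'` of the ESC reduction graph. -/
def ESCVert.vA {V : Type*} (G : SimpleGraph V) (v : V) : ESCVert G :=
  Sum.inl (Sum.inl v)

/-- The vertex `v''` of the ESC reduction graph. -/
def ESCVert.vB {V : Type*} (G : SimpleGraph V) (v : V) : ESCVert G :=
  Sum.inl (Sum.inr v)

/-- The vertex `e'` of the ESC reduction graph. -/
def ESCVert.eA {V : Type*} (G : SimpleGraph V) (e : G.edgeSet) : ESCVert G :=
  Sum.inr (Sum.inl e)

/-- The vertex `e''` of the ESC reduction graph. -/
def ESCVert.eB {V : Type*} (G : SimpleGraph V) (e : G.edgeSet) : ESCVert G :=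
  Sum.inr (Sum.inr e)

/-- The edge set of the ESC reduction graph of `G`: an edge `(v', v'')` for every vertex
`v` of `G`, and edges `(e', u')`, `(e', w')`, `(u'', e'')`, `(w'', e'')` for every
undirected edge `e = {u, w}` of `G` (i.e. edges `(e', v')` and `(v'', e'')` for every
endpoint `v` of `e`). -/
def ESCEdges {V : Type*} (G : SimpleGraph V) : Set (ESCVert G × ESCVert G) :=
  {p | (∃ v : V, p = (ESCVert.vA G v, ESCVert.vB G v)) ∨
       (∃ (e : G.edgeSet) (v : V), v ∈ (e : Sym2 V) ∧ p = (ESCVert.eA G e, ESCVert.vA G v)) ∨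
       (∃ (e : G.edgeSet) (v : V), v ∈ (e : Sym2 V) ∧ p = (ESCVert.vB G v, ESCVert.eB G e))}

/-- A vertex cover of the undirected graph `G`: a set of vertices meeting every edge. -/
def IsVertexCover {V : Type*} (G : SimpleGraph V) (U : Set V) : Prop :=
  ∀ e ∈ G.edgeSet, ∃ v ∈ U, v ∈ e

/-!
Let `U` be the set of vertices `v` of `G` such that `C` contains an edge of `G'` at `v'` or
`v''`. Each edge of `G'` meets `v'` or `v''` for only one `v`, so `|U| ≤ |C|`. If an edge
`e = {u, w}` were not covered by `U`, then `e' → u' → u'' → e''` and `e' → w' → w'' → e''`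
would be two different simple paths avoiding `C`.
-/

/-- The vertex `v` with `v'` or `v''` on a given edge of `G'` (arbitrary off `G'`). -/
def escLabel {V : Type*} (G : SimpleGraph V) : ESCVert G × ESCVert G → Option V
  | (Sum.inl (Sum.inl v), _) => some v
  | (Sum.inl (Sum.inr v), _) => some v
  | (_, Sum.inl (Sum.inl v)) => some v
  | _ => none

def escCover {V : Type*} (G : SimpleGraph V) (C : Set (ESCVert G × ESCVert G)) : Set V :=
  {v | some v ∈ escLabel G '' C}

namespace ESCVert

variable {V : Type*} {G : SimpleGraph V}

lemma vA_injective : Function.Injective (vA G) :=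
  fun _ _ h => Sum.inl_injective (Sum.inl_injective h)

lemma nodup_eA_vA_vB_eB (e : G.edgeSet) (v : V) : [eA G e, vA G v, vB G v, eB G e].Nodup := by
  unfold eA vA vB eB ESCVert
  simp

end ESCVert

section

open ESCVert

variable {V : Type*} {G : SimpleGraph V} {C : Set (ESCVert G × ESCVert G)}

lemma ncard_escCover_le (hC : C.Finite) : (escCover G C).ncard ≤ C.ncard :=
  calc (escCover G C).ncard ≤ (escLabel G '' C).ncard :=
        Set.ncard_le_ncard_of_injOn some (fun _ hv => hv) (Option.some_injective V).injOn
          (hC.image _)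
    _ ≤ C.ncard := Set.ncard_image_le hC

lemma isSimplePath_eA_vA_vB_eB {e : G.edgeSet} {v : V} (hv : v ∈ (e : Sym2 V))
    (hvC : v ∉ escCover G C) :
    IsSimplePath (fun a b : ESCVert G => (a, b) ∈ ESCEdges G \ C) (eA G e) (eB G e)
      [eA G e, vA G v, vB G v, eB G e] := by
  have hnC : ∀ p ∈ C, escLabel G p ≠ some v := fun p hp hpv => hvC ⟨p, hp, hpv⟩
  refine ⟨List.isChain_cons_cons.2 ⟨?_, List.isChain_cons_cons.2 ⟨?_, List.isChain_pair.2 ?_⟩⟩,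
    rfl, rfl, nodup_eA_vA_vB_eB e v⟩
  · exact ⟨Or.inr (Or.inl ⟨e, v, hv, rfl⟩), fun h => hnC _ h rfl⟩
  · exact ⟨Or.inl ⟨v, rfl⟩, fun h => hnC _ h rfl⟩
  · exact ⟨Or.inr (Or.inr ⟨e, v, hv, rfl⟩), fun h => hnC _ h rfl⟩

lemma isVertexCover_escCover
    (hsc : SinglyConnected (fun a b : ESCVert G => (a, b) ∈ ESCEdges G \ C)) :
    IsVertexCover G (escCover G C) := by
  intro e he
  induction e using Sym2.ind with
  | _ u w =>
    by_contra! hunc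
    let e : G.edgeSet := ⟨s(u, w), he⟩
    have hpaths := hsc _ _ _ _
      (isSimplePath_eA_vA_vB_eB (e := e) (Sym2.mem_mk_left u w) (fun h => hunc u h (by simp)))
      (isSimplePath_eA_vA_vB_eB (e := e) (Sym2.mem_mk_right u w) (fun h => hunc w h (by simp)))
    simp only [List.cons.injEq] at hpaths
    exact G.ne_of_adj he (vA_injective hpaths.2.1)

end

theorem vertexCover_of_esc_general {V : Type*} [Finite V] (G : SimpleGraph V)
    (C : Set (ESCVert G × ESCVert G))
    (hsc : SinglyConnected (fun a b : ESCVert G => (a, b) ∈ ESCEdges G \ C)) :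
    ∃ U : Set V, IsVertexCover G U ∧ U.ncard ≤ C.ncard := by
  have : Finite (ESCVert G) := by unfold ESCVert; infer_instance
  exact ⟨escCover G C, isVertexCover_escCover hsc, ncard_escCover_le C.toFinite⟩

/-- if removing an edge set `C ⊆ E'` from the ESC reduction graph of a
finite undirected graph `G` leaves a singly-connected directed graph, then `G` has a
vertex cover of size at most `|C|`. -/
theorem vertexCover_of_esc {V : Type*} [Finite V] (G : SimpleGraph V)
    (C : Set (ESCVert G × ESCVert G)) (hC : C ⊆ ESCEdges G)
    (hsc : SinglyConnected (fun a b : ESCVert G => (a, b) ∈ ESCEdges G \ C)) :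
    ∃ U : Set V, IsVertexCover G U ∧ U.ncard ≤ C.ncard :=
  vertexCover_of_esc_general G C hsc
end

section
/- Let G = (V,E) be a finite undirected graph, let G'' = (V'',E'') be the VSC reduction graph of G, and let U ⊆ V be a vertex cover of G. Define F = {v' : v ∈ U}. Then |F| = |U| and the directed graph G'' \ F obtained by deleting the vertices of F and all edges incident to them is singly-connected. -/
/-- The vertex set of the VSC reduction graph of an undirected graph `G`: a vertex `v'`
for every vertex `v` of `G` and two vertices `e'`, `e''` for every edge `e` of `G`. -/
def VSCVert {V : Type*} (G : SimpleGraph V) : Type _ :=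
  V ⊕ (G.edgeSet ⊕ G.edgeSet)

/-- The vertex `v'` of the VSC reduction graph. -/
def VSCVert.vv {V : Type*} (G : SimpleGraph V) (v : V) : VSCVert G :=
  Sum.inl v

/-- The vertex `e'` of the VSC reduction graph. -/
def VSCVert.eA {V : Type*} (G : SimpleGraph V) (e : G.edgeSet) : VSCVert G :=
  Sum.inr (Sum.inl e)

/-- The vertex `e''` of the VSC reduction graph. -/
def VSCVert.eB {V : Type*} (G : SimpleGraph V) (e : G.edgeSet) : VSCVert G :=
  Sum.inr (Sum.inr e)

/-- The edge set of the VSC reduction graph of `G`: for every undirected edge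
`e = {u, w}` of `G`, the four edges `(e', u')`, `(e', w')`, `(u', e'')`, `(w', e'')`
(i.e. edges `(e', v')` and `(v', e'')` for every endpoint `v` of `e`). -/
def VSCEdges {V : Type*} (G : SimpleGraph V) : Set (VSCVert G × VSCVert G) :=
  {p | (∃ (e : G.edgeSet) (v : V), v ∈ (e : Sym2 V) ∧ p = (VSCVert.eA G e, VSCVert.vv G v)) ∨
       (∃ (e : G.edgeSet) (v : V), v ∈ (e : Sym2 V) ∧ p = (VSCVert.vv G v, VSCVert.eB G e))}

/-!
Grade the VSC graph by `e' ↦ 0`, `v' ↦ 1`, `e'' ↦ 2`: every edge raises the grade by one,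
so any path from `x` to `y` has exactly `grade y - grade x ≤ 2` edges. Paths with at most one
edge are determined by their endpoints. A path with two edges is `e' → u' → f''` with `u`
a common endpoint of `e` and `f`; after deleting `F`, `u ∉ U`, and since `U` covers `e`, at most
one endpoint of `e` lies outside `U`, so the middle vertex is determined as well.
-/

section GradedOfHeightTwo

variable {α : Type*} {E : α → α → Prop}

theorem List.IsChain.grade_getLast (r : α → ℕ) (hr : ∀ a b, E a b → r b = r a + 1) :
    ∀ {p : List α} {v w : α}, p.IsChain E → p.head? = some v → p.getLast? = some w →
      r w = r v + (p.length - 1)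
  | [], _, _, _, hv, _ => by simp at hv
  | [a], _, _, _, hv, hw => by simp_all
  | a :: b :: t, v, w, hp, hv, hw => by
    rw [List.isChain_cons_cons] at hp
    have ih := hp.2.grade_getLast r hr rfl (by simpa using hw)
    obtain rfl : a = v := by simpa using hv
    simp only [List.length_cons] at ih ⊢
    rw [ih, hr _ _ hp.1]
    omega

theorem List.IsChain.eq_of_length_le_three {p : List α} {v w : α} (hp : p.IsChain E)
    (hv : p.head? = some v) (hw : p.getLast? = some w) (hlen : p.length ≤ 3) :
    p = [v] ∨ p = [v, w] ∨ ∃ m, p = [v, m, w] ∧ E v m ∧ E m w := by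
  rcases p with _ | ⟨a, _ | ⟨b, _ | ⟨c, _ | ⟨d, t⟩⟩⟩⟩ <;> simp_all
  omega

theorem singlyConnected_of_grade_le_two (r : α → ℕ) (hr : ∀ a b, E a b → r b = r a + 1)
    (hle : ∀ a, r a ≤ 2)
    (hmid : ∀ a m m' b, E a m → E m b → E a m' → E m' b → m = m') :
    SinglyConnected E := by
  rintro v w p q ⟨hp, hpv, hpw, -⟩ ⟨hq, hqv, hqw, -⟩
  have hp_grade := List.IsChain.grade_getLast r hr hp hpv hpw
  have hq_grade := List.IsChain.grade_getLast r hr hq hqv hqw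
  have hp_pos : 0 < p.length := List.length_pos_iff.2 (by rintro rfl; simp at hpv)
  have hq_pos : 0 < q.length := List.length_pos_iff.2 (by rintro rfl; simp at hqv)
  have hlen : p.length = q.length := by omega
  have hle3 : p.length ≤ 3 := by have := hle w; omega
  rcases List.IsChain.eq_of_length_le_three hp hpv hpw hle3 with
      rfl | rfl | ⟨m, rfl, hvm, hmw⟩ <;>
    rcases List.IsChain.eq_of_length_le_three hq hqv hqw (hlen ▸ hle3) with
      rfl | rfl | ⟨m', rfl, hvm', hm'w⟩ <;>
    simp at hlen ⊢
  exact hmid v m m' w hvm hmw hvm' hm'w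

end GradedOfHeightTwo

theorem IsVertexCover.eq_of_mem_of_notMem {V : Type*} {G : SimpleGraph V} {U : Set V}
    (hU : IsVertexCover G U) {e : Sym2 V} (he : e ∈ G.edgeSet) {u u' : V} (hu : u ∈ e)
    (hu' : u' ∈ e) (huU : u ∉ U) (hu'U : u' ∉ U) : u = u' := by
  obtain ⟨z, hzU, hz⟩ := hU e he
  have hzu : z ≠ u := fun h => huU (h ▸ hzU)
  have hzu' : z ≠ u' := fun h => hu'U (h ▸ hzU)
  have he_u := (Sym2.mem_and_mem_iff hzu).1 ⟨hz, hu⟩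
  have he_u' := (Sym2.mem_and_mem_iff hzu').1 ⟨hz, hu'⟩
  exact Sym2.congr_right.1 (he_u.symm.trans he_u')

namespace VSCVert

variable {V : Type*} {G : SimpleGraph V}

theorem vv_injective : Function.Injective (vv G) := Sum.inl_injective

def grade : VSCVert G → ℕ :=
  Sum.elim (fun _ => 1) (Sum.elim (fun _ => 0) (fun _ => 2))

theorem grade_le_two (x : VSCVert G) : grade x ≤ 2 := by
  rcases x with _ | _ | _ <;> simp [grade]

theorem grade_of_mem_VSCEdges {x y : VSCVert G} (h : (x, y) ∈ VSCEdges G) :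
    grade y = grade x + 1 := by
  rcases h with ⟨e, v, -, ⟨⟩⟩ | ⟨e, v, -, ⟨⟩⟩ <;> rfl

theorem exists_eq_eA_eq_vv_of_mem_VSCEdges {x y z : VSCVert G} (hxy : (x, y) ∈ VSCEdges G)
    (hyz : (y, z) ∈ VSCEdges G) :
    ∃ (e : G.edgeSet) (u : V), u ∈ (e : Sym2 V) ∧ x = eA G e ∧ y = vv G u := by
  rcases hxy with ⟨e, u, hu, ⟨⟩⟩ | ⟨e, u, -, ⟨⟩⟩
  · exact ⟨e, u, hu, rfl, rfl⟩
  · have hz : grade z = 3 := grade_of_mem_VSCEdges hyz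
    exact absurd (grade_le_two z) (by omega)

end VSCVert

open VSCVert in
theorem vsc_of_vertexCover_general {V : Type*} (G : SimpleGraph V) (U : Set V)
    (hU : IsVertexCover G U) :
    ({x : VSCVert G | ∃ v ∈ U, x = vv G v}.ncard = U.ncard) ∧
    SinglyConnected (fun a b : {x : VSCVert G // x ∉ {y : VSCVert G | ∃ v ∈ U, y = vv G v}} =>
      (a.1, b.1) ∈ VSCEdges G) := by
  refine ⟨?_, singlyConnected_of_grade_le_two (grade ∘ Subtype.val)
    (fun a b h => grade_of_mem_VSCEdges h) (fun a => grade_le_two a.1) ?_⟩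
  · convert Set.ncard_image_of_injective U vv_injective using 2
    ext
    simp [eq_comm]
  · intro a m m' b ham hmb ham' hm'b
    obtain ⟨e, u, hu, ha, hm⟩ := exists_eq_eA_eq_vv_of_mem_VSCEdges ham hmb
    obtain ⟨e', u', hu', ha', hm'⟩ := exists_eq_eA_eq_vv_of_mem_VSCEdges ham' hm'b
    obtain rfl : e = e' := Sum.inl_injective (Sum.inr_injective (ha.symm.trans ha'))
    have huU : u ∉ U := fun huU => m.2 ⟨u, huU, hm⟩
    have hu'U : u' ∉ U := fun hu'U => m'.2 ⟨u', hu'U, hm'⟩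
    obtain rfl := hU.eq_of_mem_of_notMem e.2 hu hu' huU hu'U
    exact Subtype.ext (hm.trans hm'.symm)

open VSCVert in
/-- if `U` is a vertex cover of a finite undirected graph `G` and
`F = {v' : v ∈ U}`, then `|F| = |U|` and deleting the vertices in `F` (together with all
incident edges) from the VSC reduction graph of `G` leaves a singly-connected directed
graph. -/
theorem vsc_of_vertexCover {V : Type*} [Finite V] (G : SimpleGraph V) (U : Set V)
    (hU : IsVertexCover G U) :
    ({x : VSCVert G | ∃ v ∈ U, x = vv G v}.ncard = U.ncard) ∧
    SinglyConnected (fun a b : {x : VSCVert G // x ∉ {y : VSCVert G | ∃ v ∈ U, y = vv G v}} =>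
      (a.1, b.1) ∈ VSCEdges G) :=
  vsc_of_vertexCover_general G U hU
end
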